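/- Let E be a Banach space and let (𝒜,dom(𝒜)) be a Hille–Yosida operator on the Banach algebra 𝓛(E), i.e., a linear operator for which there exist ω ∈ ℝ and M ≥ 1 with (ω,∞) ⊆ ρ(𝒜) and ‖R(λ,𝒜)ⁿ‖ ≤ M/(λ−ω)ⁿ for all λ > ω and n ∈ ℕ. Assume in addition that λ·R(λ,𝒜)(Id)x → x in E for every x ∈ E as λ → ∞ (as holds when 𝒜 is the generator of a τ_sot-bi-continuous semigroup on 𝓛(E)). Then the following are equivalent: (i) dom(𝒜) is a right ideal of 𝓛(E) and 𝒜 is a right 𝓛(E)-module homomorphism, i.e., for every C ∈ dom(𝒜) and B ∈ 𝓛(E) one has C∘B ∈ dom(𝒜) and 𝒜(C∘B) = 𝒜(C)∘B; (ii) there exists a Hille–Yosida operator (A,dom(A)) on E such that dom(𝒜) = {C ∈ 𝓛(E) : Ran(C) ⊆ dom(A) and A∘C ∈ 𝓛(E)} and 𝒜(C) = A∘C for all C ∈ dom(𝒜). -/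

import Mathlib

open Set Filter Topology

variable {Z : Type*} [NormedAddCommGroup Z] [NormedSpace ℝ Z]

/-- `R` is the resolvent at `λ` of the (possibly unbounded) linear operator `A` with domain `D`:
`λ - A : D → Z` is bijective with bounded inverse `R`. -/
def IsResolventAt (D : Submodule ℝ Z) (A : D →ₗ[ℝ] Z) (lam : ℝ) (R : Z →L[ℝ] Z) : Prop :=
  (∀ z : Z, ∃ h : R z ∈ D, lam • (R z) - A ⟨R z, h⟩ = z) ∧
    ∀ C : D, R (lam • (C : Z) - A C) = (C : Z)

/-- `(A, D)` is a Hille–Yosida operator: there are `ω ∈ ℝ`, `M ≥ 1` with `(ω,∞) ⊆ ρ(A)` and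
`‖R(λ,A)ⁿ‖ ≤ M/(λ-ω)ⁿ` for all `λ > ω`, `n ∈ ℕ`. -/
def IsHilleYosida (D : Submodule ℝ Z) (A : D →ₗ[ℝ] Z) : Prop :=
  ∃ (ω M : ℝ), 1 ≤ M ∧ ∃ R : ℝ → Z →L[ℝ] Z, ∀ lam : ℝ, ω < lam →
    IsResolventAt D A lam (R lam) ∧ ∀ n : ℕ, ‖(R lam) ^ n‖ ≤ M / (lam - ω) ^ n

/-!
A right `𝓛(E)`-module homomorphism `𝒜` has resolvent `R(λ, 𝒜) C = r(λ) ∘ C` with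
`r(λ) := R(λ, 𝒜) Id`, so `r` inherits the resolvent identity and the Hille–Yosida bounds. The
approximation `λ r(λ) x → x` makes each `r(λ)` injective, hence `r` is the resolvent of
`A := λ₀ - r(λ₀)⁻¹` on `Ran r(λ₀)`, and writing `C = r(λ₀)(λ₀ C - 𝒜 C)` identifies `dom 𝒜` and
`𝒜` with left multiplication by `A`. The converse implication is a direct computation.
-/

namespace IsResolventAt

variable {D : Submodule ℝ Z} {A : D →ₗ[ℝ] Z} {lam : ℝ} {R : Z →L[ℝ] Z}

theorem apply_mem (h : IsResolventAt D A lam R) (z : Z) : R z ∈ D :=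
  (h.1 z).1

theorem mem_iff (h : IsResolventAt D A lam R) (y : Z) : y ∈ D ↔ ∃ z, R z = y :=
  ⟨fun hy => ⟨_, h.2 ⟨y, hy⟩⟩, fun ⟨z, hz⟩ => hz ▸ h.apply_mem z⟩

theorem map_eq_iff (h : IsResolventAt D A lam R) (y : D) (w : Z) :
    A y = w ↔ R (lam • (y : Z) - w) = y := by
  refine ⟨fun hw => hw ▸ h.2 y, fun hy => ?_⟩
  obtain ⟨hmem, hz⟩ := h.1 (lam • (y : Z) - w)
  have hy' : (⟨R (lam • (y : Z) - w), hmem⟩ : D) = y := Subtype.ext hy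
  rw [hy', hy, sub_right_inj] at hz
  exact hz

theorem resolvent_identity {μ : ℝ} {S : Z →L[ℝ] Z} (hR : IsResolventAt D A lam R)
    (hS : IsResolventAt D A μ S) : S = R + (lam - μ) • (R * S) := by
  ext z
  obtain ⟨hmem, hz⟩ := hS.1 z
  have key : R (lam • S z - A ⟨S z, hmem⟩) = S z := hR.2 ⟨S z, hmem⟩
  generalize A ⟨S z, hmem⟩ = a at hz key
  rw [show lam • S z - a = (lam - μ) • S z + z by linear_combination (norm := module) hz,
    map_add, map_smul] at key
  rw [← key, add_comm]
  rfl

end IsResolventAt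

def IsPseudoResolvent (ω : ℝ) (r : ℝ → Z →L[ℝ] Z) : Prop :=
  ∀ lam μ, ω < lam → ω < μ → r μ = r lam + (lam - μ) • (r lam * r μ)

namespace IsPseudoResolvent

variable {ω : ℝ} {r : ℝ → Z →L[ℝ] Z}

theorem apply_eq (hr : IsPseudoResolvent ω r) {lam μ : ℝ} (hlam : ω < lam) (hμ : ω < μ) (x : Z) :
    r μ x = r lam x + (lam - μ) • r lam (r μ x) := by
  simpa using congrArg (· x) (hr lam μ hlam hμ)

theorem injective (hr : IsPseudoResolvent ω r)
    (happrox : ∀ x, Tendsto (fun lam => lam • r lam x) atTop (𝓝 x)) {μ : ℝ} (hμ : ω < μ) :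
    Function.Injective (r μ) := by
  refine (injective_iff_map_eq_zero (r μ)).2 fun x hx => ?_
  have hzero : (fun lam => lam • r lam x) =ᶠ[atTop] fun _ => 0 := by
    filter_upwards [eventually_gt_atTop ω] with lam hlam
    have : r lam x = 0 := by simpa [hx, eq_comm] using hr.apply_eq hlam hμ x
    simp [this]
  exact tendsto_nhds_unique (happrox x) (tendsto_const_nhds.congr' hzero.symm)

theorem isResolventAt {D : Submodule ℝ Z} {A : D →ₗ[ℝ] Z} (hr : IsPseudoResolvent ω r)
    {lam₀ lam : ℝ} (hlam₀ : ω < lam₀) (hlam : ω < lam) (h₀ : IsResolventAt D A lam₀ (r lam₀)) :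
    IsResolventAt D A lam (r lam) := by
  refine ⟨fun z => ?_, fun y => ?_⟩
  · have hw : r lam₀ (z + (lam₀ - lam) • r lam z) = r lam z := by
      rw [map_add, map_smul, ← hr.apply_eq hlam₀ hlam z]
    have hmem : r lam z ∈ D := (h₀.mem_iff _).2 ⟨_, hw⟩
    have hA : A ⟨r lam z, hmem⟩ = lam₀ • r lam z - (z + (lam₀ - lam) • r lam z) :=
      (h₀.map_eq_iff _ _).2 (by simpa using hw)
    refine ⟨hmem, ?_⟩
    rw [hA]
    module
  · have hy := h₀.2 y
    have key := hr.apply_eq hlam hlam₀ (lam₀ • (y : Z) - A y)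
    rw [hy] at key
    rw [show lam • (y : Z) - A y = (lam - lam₀) • (y : Z) + (lam₀ • (y : Z) - A y) by module,
      map_add, map_smul, add_comm]
    exact key.symm

end IsPseudoResolvent

noncomputable def invSubOfInjective (T : Z →L[ℝ] Z) (hT : Function.Injective T) (lam₀ : ℝ) :
    LinearMap.range (T : Z →ₗ[ℝ] Z) →ₗ[ℝ] Z :=
  lam₀ • (LinearMap.range (T : Z →ₗ[ℝ] Z)).subtype -
    (LinearEquiv.ofInjective (T : Z →ₗ[ℝ] Z) hT).symm.toLinearMap

theorem isResolventAt_invSubOfInjective (T : Z →L[ℝ] Z) (hT : Function.Injective T)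
    (lam₀ : ℝ) : IsResolventAt _ (invSubOfInjective T hT lam₀) lam₀ T := by
  have hTe : ∀ y, T ((LinearEquiv.ofInjective (T : Z →ₗ[ℝ] Z) hT).symm y) = y := fun y => by
    have h := LinearEquiv.ofInjective_apply (f := (T : Z →ₗ[ℝ] Z)) (h := hT)
      ((LinearEquiv.ofInjective (T : Z →ₗ[ℝ] Z) hT).symm y)
    rw [LinearEquiv.apply_symm_apply] at h
    exact h.symm
  refine ⟨fun z => ⟨⟨z, rfl⟩, ?_⟩, fun y => ?_⟩
  · simp [invSubOfInjective, hT (hTe ⟨T z, z, rfl⟩)]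
  · simp [invSubOfInjective, hTe]

section RightModuleHom

variable {E : Type*} [NormedAddCommGroup E] [NormedSpace ℝ E]

def IsRightModuleHom (D : Submodule ℝ (E →L[ℝ] E)) (A : D →ₗ[ℝ] (E →L[ℝ] E)) : Prop :=
  ∀ (C : D) (B : E →L[ℝ] E),
    ∃ h : (C : E →L[ℝ] E).comp B ∈ D, A ⟨(C : E →L[ℝ] E).comp B, h⟩ = (A C).comp B

variable {D : Submodule ℝ (E →L[ℝ] E)} {A : D →ₗ[ℝ] (E →L[ℝ] E)}

theorem isRightModuleHom_of_eq_comp {DA : Submodule ℝ E} {A₀ : DA →ₗ[ℝ] E}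
    (hD : ∀ C : E →L[ℝ] E, C ∈ D ↔
      ∃ (h : ∀ x : E, C x ∈ DA) (L : E →L[ℝ] E), ∀ x : E, L x = A₀ ⟨C x, h x⟩)
    (hA : ∀ (C : D) (h : ∀ x : E, (C : E →L[ℝ] E) x ∈ DA) (x : E),
      (A C) x = A₀ ⟨(C : E →L[ℝ] E) x, h x⟩) :
    IsRightModuleHom D A := by
  intro C B
  obtain ⟨hC, L, hL⟩ := (hD C).1 C.2
  have hCB : (C : E →L[ℝ] E).comp B ∈ D :=
    (hD _).2 ⟨fun x => hC (B x), L.comp B, fun x => hL (B x)⟩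
  exact ⟨hCB, ContinuousLinearMap.ext fun x =>
    (hA _ (fun x => hC (B x)) x).trans (hA C hC (B x)).symm⟩

variable {lam : ℝ} {R : (E →L[ℝ] E) →L[ℝ] (E →L[ℝ] E)}

theorem IsResolventAt.apply_eq_mul (hR : IsResolventAt D A lam R) (hA : IsRightModuleHom D A)
    (C : E →L[ℝ] E) : R C = R 1 * C := by
  obtain ⟨hmem, hR1⟩ := hR.1 1
  obtain ⟨hCmem, hAC⟩ := hA ⟨R 1, hmem⟩ C
  have hA1 : A ⟨R 1, hmem⟩ = lam • R 1 - 1 :=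
    (sub_sub_cancel (lam • R 1) _).symm.trans (congrArg (lam • R 1 - ·) hR1)
  have hAC' : A ⟨R 1 * C, hCmem⟩ = lam • (R 1 * C) - C :=
    calc A ⟨R 1 * C, hCmem⟩ = A ⟨R 1, hmem⟩ * C := hAC
      _ = lam • (R 1 * C) - C := by rw [hA1, sub_mul, smul_mul_assoc, one_mul]
  simpa using (hR.map_eq_iff _ _).1 hAC'

theorem norm_pow_apply_one_le (hR : ∀ C, R C = R 1 * C) (n : ℕ) : ‖R 1 ^ n‖ ≤ ‖R ^ n‖ := by
  have hpow : (R ^ n) 1 = R 1 ^ n := by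
    have hmulLeft : (R : (E →L[ℝ] E) →ₗ[ℝ] (E →L[ℝ] E)) = LinearMap.mulLeft ℝ (R 1) :=
      LinearMap.ext hR
    have h := congrArg (fun T => (T ^ n) 1) hmulLeft
    rwa [← ContinuousLinearMap.toLinearMap_pow, LinearMap.pow_mulLeft, LinearMap.mulLeft_apply,
      mul_one] at h
  calc ‖R 1 ^ n‖ = ‖(R ^ n) 1‖ := by rw [hpow]
    _ ≤ ‖R ^ n‖ * ‖(1 : E →L[ℝ] E)‖ := (R ^ n).le_opNorm 1
    _ ≤ ‖R ^ n‖ := mul_le_of_le_one_right (by positivity) ContinuousLinearMap.norm_id_le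

namespace IsResolventAt

variable {DA : Submodule ℝ E} {A₀ : DA →ₗ[ℝ] E} (hR : IsResolventAt D A lam R)
  (hmul : ∀ C, R C = R 1 * C) (h₀ : IsResolventAt DA A₀ lam (R 1))
include hR hmul

theorem resolvent_one_apply (C : D) (x : E) :
    R 1 (lam • (C : E →L[ℝ] E) x - A C x) = (C : E →L[ℝ] E) x := by
  have h := hR.2 C
  rw [hmul] at h
  exact congrArg (· x) h

include h₀

theorem apply_mem_of_mem (C : D) (x : E) : (C : E →L[ℝ] E) x ∈ DA :=
  (h₀.mem_iff _).2 ⟨_, hR.resolvent_one_apply hmul C x⟩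

theorem map_apply_eq (C : D) {x : E} (h : (C : E →L[ℝ] E) x ∈ DA) :
    A₀ ⟨(C : E →L[ℝ] E) x, h⟩ = A C x :=
  (h₀.map_eq_iff _ _).2 (hR.resolvent_one_apply hmul C x)

theorem mem_iff_forall_apply_mem (C : E →L[ℝ] E) :
    C ∈ D ↔ ∃ (h : ∀ x : E, C x ∈ DA) (L : E →L[ℝ] E), ∀ x : E, L x = A₀ ⟨C x, h x⟩ := by
  refine ⟨fun hC => ⟨hR.apply_mem_of_mem hmul h₀ ⟨C, hC⟩, A ⟨C, hC⟩,
    fun x => (hR.map_apply_eq hmul h₀ ⟨C, hC⟩ _).symm⟩, fun ⟨h, L, hL⟩ => ?_⟩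
  have hC : R (lam • C - L) = C := by
    rw [hmul]
    ext x
    simpa [hL] using h₀.2 ⟨C x, h x⟩
  exact hC ▸ hR.apply_mem _

end IsResolventAt

end RightModuleHom

theorem stmt_4_general {E : Type*} [NormedAddCommGroup E] [NormedSpace ℝ E]
    (D : Submodule ℝ (E →L[ℝ] E)) (A : D →ₗ[ℝ] (E →L[ℝ] E))
    (ω M : ℝ) (hM : 1 ≤ M) (R : ℝ → (E →L[ℝ] E) →L[ℝ] (E →L[ℝ] E))
    (hres : ∀ lam : ℝ, ω < lam → IsResolventAt D A lam (R lam))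
    (hHY : ∀ lam : ℝ, ω < lam → ∀ n : ℕ, ‖(R lam) ^ n‖ ≤ M / (lam - ω) ^ n)
    (happrox : ∀ x : E, Tendsto (fun lam : ℝ => lam • (R lam 1 x)) atTop (nhds x)) :
    (∀ (C : D) (B : E →L[ℝ] E),
        ∃ h : (C : E →L[ℝ] E).comp B ∈ D, A ⟨(C : E →L[ℝ] E).comp B, h⟩ = (A C).comp B) ↔
      (∃ (DA : Submodule ℝ E) (A₀ : DA →ₗ[ℝ] E), IsHilleYosida DA A₀ ∧
        (∀ C : E →L[ℝ] E, C ∈ D ↔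
          ∃ (h : ∀ x : E, C x ∈ DA) (L : E →L[ℝ] E), ∀ x : E, L x = A₀ ⟨C x, h x⟩) ∧
        ∀ (C : D) (h : ∀ x : E, (C : E →L[ℝ] E) x ∈ DA) (x : E),
          (A C) x = A₀ ⟨(C : E →L[ℝ] E) x, h x⟩) := by
  refine ⟨fun hA => ?_, fun ⟨_, _, _, hD, hA₀⟩ => isRightModuleHom_of_eq_comp hD hA₀⟩
  set r : ℝ → E →L[ℝ] E := fun lam => R lam 1
  have hmul : ∀ lam, ω < lam → ∀ C, R lam C = r lam * C := fun lam hlam =>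
    (hres lam hlam).apply_eq_mul hA
  have hr : IsPseudoResolvent ω r := fun lam μ hlam hμ => by
    have h := congrArg (· 1) ((hres lam hlam).resolvent_identity (hres μ hμ))
    simpa [hmul lam hlam] using h
  have hω : ω < ω + 1 := lt_add_one ω
  have hinj := hr.injective happrox hω
  have h₀ := isResolventAt_invSubOfInjective (r (ω + 1)) hinj (ω + 1)
  refine ⟨_, _, ⟨ω, M, hM, r, fun lam hlam => ⟨hr.isResolventAt hω hlam h₀, fun n =>
    (norm_pow_apply_one_le (hmul lam hlam) n).trans (hHY lam hlam n)⟩⟩,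
    (hres _ hω).mem_iff_forall_apply_mem (hmul _ hω) h₀,
    fun C h x => ((hres _ hω).map_apply_eq (hmul _ hω) h₀ C (h x)).symm⟩

/-- For a Hille–Yosida operator `(𝒜, dom 𝒜)` on `𝓛(E)` with
`λ R(λ,𝒜)(Id)x → x` for all `x`, the following are equivalent: (i) `dom 𝒜` is a right ideal
and `𝒜` a right `𝓛(E)`-module homomorphism; (ii) `𝒜` is left multiplication by a Hille–Yosida
operator `(A, dom A)` on `E`, with `dom 𝒜 = {C : Ran C ⊆ dom A, A∘C ∈ 𝓛(E)}`. -/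
theorem stmt_4 {E : Type*} [NormedAddCommGroup E] [NormedSpace ℝ E] [CompleteSpace E]
    (D : Submodule ℝ (E →L[ℝ] E)) (A : D →ₗ[ℝ] (E →L[ℝ] E))
    (ω M : ℝ) (hM : 1 ≤ M) (R : ℝ → (E →L[ℝ] E) →L[ℝ] (E →L[ℝ] E))
    (hres : ∀ lam : ℝ, ω < lam → IsResolventAt D A lam (R lam))
    (hHY : ∀ lam : ℝ, ω < lam → ∀ n : ℕ, ‖(R lam) ^ n‖ ≤ M / (lam - ω) ^ n)
    (happrox : ∀ x : E, Tendsto (fun lam : ℝ => lam • (R lam 1 x)) atTop (nhds x)) :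
    (∀ (C : D) (B : E →L[ℝ] E),
        ∃ h : (C : E →L[ℝ] E).comp B ∈ D, A ⟨(C : E →L[ℝ] E).comp B, h⟩ = (A C).comp B) ↔
      (∃ (DA : Submodule ℝ E) (A₀ : DA →ₗ[ℝ] E), IsHilleYosida DA A₀ ∧
        (∀ C : E →L[ℝ] E, C ∈ D ↔
          ∃ (h : ∀ x : E, C x ∈ DA) (L : E →L[ℝ] E), ∀ x : E, L x = A₀ ⟨C x, h x⟩) ∧
        ∀ (C : D) (h : ∀ x : E, (C : E →L[ℝ] E) x ∈ DA) (x : E),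
          (A C) x = A₀ ⟨(C : E →L[ℝ] E) x, h x⟩) :=
  stmt_4_general D A ω M hM R hres hHY happrox
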